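/- arXiv:1207.6458 — 5 statements merged into one kernel-verified Lean document; each statement's English description precedes it below -/
import Mathlib

section
/- Suppose complex numbers a_2, a_3, b_1, b_2, c_1, c_2 and real numbers α, β, B_1, B_2, D_1, D_2 with B_1, D_1 > 0 satisfy: (1+2α) a_2 = B_1 c_1/2; 2(1+3α) a_3 − (1+2α) a_2^2 = (B_1/2)(c_2 − c_1^2/2) + (B_2/4) c_1^2; −(1+2β) a_2 = D_1 b_1/2; and (3+10β) a_2^2 − 2(1+3β) a_3 = (D_1/2)(b_2 − b_1^2/2) + (D_2/4) b_1^2. Then b_1 = −(B_1(1+2β)/(D_1(1+2α))) c_1, and a_2^2 · [σ B_1^2 D_1^2 − (1+2α)^2(1+3β)(B_2−B_1) D_1^2 − (1+2β)^2(1+3α)(D_2−D_1) B_1^2] = (B_1^2 D_1^2/2)[B_1(1+3β) c_2 + D_1(1+3α) b_2], where σ = 2 + 7α + 7β + 24αβ. -/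
/-!
The two first-order relations express `c₁` and `b₁` through `a₂`, which gives the ratio
`b₁ / c₁` and the squares `B₁² c₁²`, `D₁² b₁²` as multiples of `a₂²`. Adding `(1 + 3β)` times the
second relation to `(1 + 3α)` times the fourth eliminates `a₃`, leaving `σ a₂²` on the left, as
`σ = (1 + 3α)(3 + 10β) - (1 + 3β)(1 + 2α)`;
substituting the squares of `c₁` and `b₁` then yields the identity for `a₂²`.
-/

section CoefficientRelations

variable {K : Type*} [Field K] [CharZero K] (a₂ a₃ b₁ b₂ c₁ c₂ α β B₁ B₂ D₁ D₂ : K)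

theorem eq_neg_div_mul_of_coeff_relations (hD₁ : D₁ ≠ 0) (hα : 1 + 2 * α ≠ 0)
    (h1 : (1 + 2 * α) * a₂ = B₁ * c₁ / 2) (h3 : -((1 + 2 * β) * a₂) = D₁ * b₁ / 2) :
    b₁ = -(B₁ * (1 + 2 * β) / (D₁ * (1 + 2 * α))) * c₁ := by
  field_simp
  linear_combination (-2 * (1 + 2 * β)) * h1 - (2 * (1 + 2 * α)) * h3

theorem sq_mul_sigma_eq_of_coeff_relations
    (h2 : 2 * (1 + 3 * α) * a₃ - (1 + 2 * α) * a₂ ^ 2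
      = B₁ / 2 * (c₂ - c₁ ^ 2 / 2) + B₂ / 4 * c₁ ^ 2)
    (h4 : (3 + 10 * β) * a₂ ^ 2 - 2 * (1 + 3 * β) * a₃
      = D₁ / 2 * (b₂ - b₁ ^ 2 / 2) + D₂ / 4 * b₁ ^ 2) :
    a₂ ^ 2 * (2 + 7 * α + 7 * β + 24 * α * β)
      = (1 + 3 * β) * (B₁ / 2 * c₂ + (B₂ - B₁) / 4 * c₁ ^ 2)
        + (1 + 3 * α) * (D₁ / 2 * b₂ + (D₂ - D₁) / 4 * b₁ ^ 2) := by
  linear_combination (1 + 3 * β) * h2 + (1 + 3 * α) * h4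

theorem sq_eq_four_mul_sq_of_eq_div_two {u v : K} (h : u = v / 2) : v ^ 2 = 4 * u ^ 2 := by
  rw [h]; ring

theorem sq_mul_eq_of_coeff_relations
    (h1 : (1 + 2 * α) * a₂ = B₁ * c₁ / 2)
    (h2 : 2 * (1 + 3 * α) * a₃ - (1 + 2 * α) * a₂ ^ 2
      = B₁ / 2 * (c₂ - c₁ ^ 2 / 2) + B₂ / 4 * c₁ ^ 2)
    (h3 : -((1 + 2 * β) * a₂) = D₁ * b₁ / 2)
    (h4 : (3 + 10 * β) * a₂ ^ 2 - 2 * (1 + 3 * β) * a₃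
      = D₁ / 2 * (b₂ - b₁ ^ 2 / 2) + D₂ / 4 * b₁ ^ 2) :
    a₂ ^ 2 * ((2 + 7 * α + 7 * β + 24 * α * β) * B₁ ^ 2 * D₁ ^ 2
        - (1 + 2 * α) ^ 2 * (1 + 3 * β) * (B₂ - B₁) * D₁ ^ 2
        - (1 + 2 * β) ^ 2 * (1 + 3 * α) * (D₂ - D₁) * B₁ ^ 2)
      = B₁ ^ 2 * D₁ ^ 2 / 2 * (B₁ * (1 + 3 * β) * c₂ + D₁ * (1 + 3 * α) * b₂) := by
  have hσ := sq_mul_sigma_eq_of_coeff_relations a₂ a₃ b₁ b₂ c₁ c₂ α β B₁ B₂ D₁ D₂ h2 h4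
  have hc₁ := sq_eq_four_mul_sq_of_eq_div_two h1
  have hb₁ := sq_eq_four_mul_sq_of_eq_div_two h3
  linear_combination B₁ ^ 2 * D₁ ^ 2 * hσ + D₁ ^ 2 * (1 + 3 * β) * (B₂ - B₁) / 4 * hc₁
    + B₁ ^ 2 * (1 + 3 * α) * (D₂ - D₁) / 4 * hb₁

end CoefficientRelations

theorem PP_coefficient_relations_general
    (a₂ a₃ b₁ b₂ c₁ c₂ : ℂ) (α β B₁ B₂ D₁ D₂ : ℝ)
    (hD₁ : 0 < D₁) (hα : 1 + 2 * α ≠ 0)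
    (h1 : (1 + 2 * (α : ℂ)) * a₂ = (B₁ : ℂ) * c₁ / 2)
    (h2 : 2 * (1 + 3 * (α : ℂ)) * a₃ - (1 + 2 * (α : ℂ)) * a₂ ^ 2
      = (B₁ : ℂ) / 2 * (c₂ - c₁ ^ 2 / 2) + (B₂ : ℂ) / 4 * c₁ ^ 2)
    (h3 : -((1 + 2 * (β : ℂ)) * a₂) = (D₁ : ℂ) * b₁ / 2)
    (h4 : (3 + 10 * (β : ℂ)) * a₂ ^ 2 - 2 * (1 + 3 * (β : ℂ)) * a₃
      = (D₁ : ℂ) / 2 * (b₂ - b₁ ^ 2 / 2) + (D₂ : ℂ) / 4 * b₁ ^ 2) :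
    b₁ = -((B₁ : ℂ) * (1 + 2 * (β : ℂ)) / ((D₁ : ℂ) * (1 + 2 * (α : ℂ)))) * c₁ ∧
    a₂ ^ 2 * (((2 + 7 * α + 7 * β + 24 * α * β : ℝ) : ℂ) * (B₁ : ℂ) ^ 2 * (D₁ : ℂ) ^ 2
        - (1 + 2 * (α : ℂ)) ^ 2 * (1 + 3 * (β : ℂ)) * ((B₂ : ℂ) - (B₁ : ℂ)) * (D₁ : ℂ) ^ 2
        - (1 + 2 * (β : ℂ)) ^ 2 * (1 + 3 * (α : ℂ)) * ((D₂ : ℂ) - (D₁ : ℂ)) * (B₁ : ℂ) ^ 2)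
      = (B₁ : ℂ) ^ 2 * (D₁ : ℂ) ^ 2 / 2
        * ((B₁ : ℂ) * (1 + 3 * (β : ℂ)) * c₂ + (D₁ : ℂ) * (1 + 3 * (α : ℂ)) * b₂) := by
  have hD₁' : (D₁ : ℂ) ≠ 0 := Complex.ofReal_ne_zero.mpr hD₁.ne'
  have hα' : 1 + 2 * (α : ℂ) ≠ 0 := by exact_mod_cast hα
  refine ⟨eq_neg_div_mul_of_coeff_relations a₂ b₁ c₁ α β B₁ D₁ hD₁' hα' h1 h3, ?_⟩
  push_cast
  exact sq_mul_eq_of_coeff_relations a₂ a₃ b₁ b₂ c₁ c₂ α β B₁ B₂ D₁ D₂ h1 h2 h3 h4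

/-- The coefficient relations for `f ∈ P(α,φ)`, `f⁻¹ ∈ P(β,ψ)`. -/
theorem PP_coefficient_relations
    (a₂ a₃ b₁ b₂ c₁ c₂ : ℂ) (α β B₁ B₂ D₁ D₂ : ℝ)
    (hB₁ : 0 < B₁) (hD₁ : 0 < D₁) (hα : 1 + 2 * α ≠ 0)
    (h1 : (1 + 2 * (α : ℂ)) * a₂ = (B₁ : ℂ) * c₁ / 2)
    (h2 : 2 * (1 + 3 * (α : ℂ)) * a₃ - (1 + 2 * (α : ℂ)) * a₂ ^ 2
      = (B₁ : ℂ) / 2 * (c₂ - c₁ ^ 2 / 2) + (B₂ : ℂ) / 4 * c₁ ^ 2)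
    (h3 : -((1 + 2 * (β : ℂ)) * a₂) = (D₁ : ℂ) * b₁ / 2)
    (h4 : (3 + 10 * (β : ℂ)) * a₂ ^ 2 - 2 * (1 + 3 * (β : ℂ)) * a₃
      = (D₁ : ℂ) / 2 * (b₂ - b₁ ^ 2 / 2) + (D₂ : ℂ) / 4 * b₁ ^ 2) :
    b₁ = -((B₁ : ℂ) * (1 + 2 * (β : ℂ)) / ((D₁ : ℂ) * (1 + 2 * (α : ℂ)))) * c₁ ∧
    a₂ ^ 2 * (((2 + 7 * α + 7 * β + 24 * α * β : ℝ) : ℂ) * (B₁ : ℂ) ^ 2 * (D₁ : ℂ) ^ 2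
        - (1 + 2 * (α : ℂ)) ^ 2 * (1 + 3 * (β : ℂ)) * ((B₂ : ℂ) - (B₁ : ℂ)) * (D₁ : ℂ) ^ 2
        - (1 + 2 * (β : ℂ)) ^ 2 * (1 + 3 * (α : ℂ)) * ((D₂ : ℂ) - (D₁ : ℂ)) * (B₁ : ℂ) ^ 2)
      = (B₁ : ℂ) ^ 2 * (D₁ : ℂ) ^ 2 / 2
        * ((B₁ : ℂ) * (1 + 3 * (β : ℂ)) * c₂ + (D₁ : ℂ) * (1 + 3 * (α : ℂ)) * b₂) :=
  PP_coefficient_relations_general a₂ a₃ b₁ b₂ c₁ c₂ α β B₁ B₂ D₁ D₂ hD₁ hα h1 h2 h3 h4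
end

section
/- Under the system of equations in the previous context, if additionally |b_2| ≤ 2, |c_2| ≤ 2, and the denominator expression σ B_1^2 D_1^2 − (1+2α)^2(1+3β)(B_2−B_1) D_1^2 − (1+2β)^2(1+3α)(D_2−D_1) B_1^2 is nonzero, then |a_2| ≤ B_1 D_1 √(B_1(1+3β) + D_1(1+3α)) / √(|σ B_1^2 D_1^2 − (1+2α)^2(1+3β)(B_2−B_1) D_1^2 − (1+2β)^2(1+3α)(D_2−D_1) B_1^2|), where σ = 2 + 7α + 7β + 24αβ. -/
/-!
Eliminating `a₃` between the two second-order relations, and `c₁`, `b₁` through the first-order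
ones, leaves `E a₂² = (B₁ D₁)² ((1+3β) B₁ c₂ + (1+3α) D₁ b₂) / 2`, where `E` is the denominator
of the bound. Taking moduli and using `|b₂|, |c₂| ≤ 2` gives `|E| |a₂|² ≤ (B₁ D₁)² S` with
`S = B₁(1+3β) + D₁(1+3α)`, and the bound follows by taking square roots.
-/

def ppDenom (α β B₁ B₂ D₁ D₂ : ℝ) : ℝ :=
  (2 + 7 * α + 7 * β + 24 * α * β) * B₁ ^ 2 * D₁ ^ 2
    - (1 + 2 * α) ^ 2 * (1 + 3 * β) * (B₂ - B₁) * D₁ ^ 2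
    - (1 + 2 * β) ^ 2 * (1 + 3 * α) * (D₂ - D₁) * B₁ ^ 2

theorem ppDenom_mul_sq_eq {a₂ a₃ b₁ b₂ c₁ c₂ : ℂ} {α β B₁ B₂ D₁ D₂ : ℝ}
    (h1 : (1 + 2 * (α : ℂ)) * a₂ = (B₁ : ℂ) * c₁ / 2)
    (h2 : 2 * (1 + 3 * (α : ℂ)) * a₃ - (1 + 2 * (α : ℂ)) * a₂ ^ 2
      = (B₁ : ℂ) / 2 * (c₂ - c₁ ^ 2 / 2) + (B₂ : ℂ) / 4 * c₁ ^ 2)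
    (h3 : -((1 + 2 * (β : ℂ)) * a₂) = (D₁ : ℂ) * b₁ / 2)
    (h4 : (3 + 10 * (β : ℂ)) * a₂ ^ 2 - 2 * (1 + 3 * (β : ℂ)) * a₃
      = (D₁ : ℂ) / 2 * (b₂ - b₁ ^ 2 / 2) + (D₂ : ℂ) / 4 * b₁ ^ 2) :
    (ppDenom α β B₁ B₂ D₁ D₂ : ℂ) * a₂ ^ 2 =
      (((B₁ * D₁) ^ 2 / 2 : ℝ) : ℂ) *
        ((((1 + 3 * β) * B₁ : ℝ) : ℂ) * c₂ + (((1 + 3 * α) * D₁ : ℝ) : ℂ) * b₂) := by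
  unfold ppDenom
  push_cast
  linear_combination ((1 + 3 * (β : ℂ)) * B₁ ^ 2 * D₁ ^ 2) * h2
    + ((1 + 3 * (α : ℂ)) * B₁ ^ 2 * D₁ ^ 2) * h4
    - ((1 + 3 * (β : ℂ)) * (B₂ - B₁) * D₁ ^ 2 * ((1 + 2 * (α : ℂ)) * a₂ + B₁ * c₁ / 2)) * h1
    - ((1 + 3 * (α : ℂ)) * (D₂ - D₁) * B₁ ^ 2 * (-((1 + 2 * (β : ℂ)) * a₂) + D₁ * b₁ / 2)) * h3

theorem norm_smul_add_smul_le {E : Type*} [SeminormedAddCommGroup E] [NormedSpace ℝ E]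
    {p q r : ℝ} {z w : E} (hp : 0 ≤ p) (hq : 0 ≤ q) (hz : ‖z‖ ≤ r) (hw : ‖w‖ ≤ r) :
    ‖p • z + q • w‖ ≤ (p + q) * r :=
  calc ‖p • z + q • w‖ ≤ p * ‖z‖ + q * ‖w‖ := by
        simpa only [norm_smul, Real.norm_of_nonneg hp, Real.norm_of_nonneg hq]
          using norm_add_le (p • z) (q • w)
    _ ≤ p * r + q * r := by gcongr
    _ = (p + q) * r := by ring

theorem le_mul_sqrt_div_sqrt_of_mul_sq_le {x e k s : ℝ} (hx : 0 ≤ x) (he : 0 < e) (hk : 0 ≤ k)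
    (h : e * x ^ 2 ≤ k ^ 2 * s) : x ≤ k * √s / √e := by
  rw [le_div_iff₀ (Real.sqrt_pos.mpr he)]
  calc x * √e = √(e * x ^ 2) := by rw [mul_comm, Real.sqrt_mul he.le, Real.sqrt_sq hx]
    _ ≤ √(k ^ 2 * s) := Real.sqrt_le_sqrt h
    _ = k * √s := by rw [Real.sqrt_mul (sq_nonneg k), Real.sqrt_sq hk]

/-- The bound on `|a₂|` when `f ∈ P(α,φ)` and `f⁻¹ ∈ P(β,ψ)`. -/
theorem PP_a2_bound
    (a₂ a₃ b₁ b₂ c₁ c₂ : ℂ) (α β B₁ B₂ D₁ D₂ : ℝ)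
    (hα : 0 ≤ α) (hβ : 0 ≤ β) (hB₁ : 0 < B₁) (hD₁ : 0 < D₁)
    (h1 : (1 + 2 * (α : ℂ)) * a₂ = (B₁ : ℂ) * c₁ / 2)
    (h2 : 2 * (1 + 3 * (α : ℂ)) * a₃ - (1 + 2 * (α : ℂ)) * a₂ ^ 2
      = (B₁ : ℂ) / 2 * (c₂ - c₁ ^ 2 / 2) + (B₂ : ℂ) / 4 * c₁ ^ 2)
    (h3 : -((1 + 2 * (β : ℂ)) * a₂) = (D₁ : ℂ) * b₁ / 2)
    (h4 : (3 + 10 * (β : ℂ)) * a₂ ^ 2 - 2 * (1 + 3 * (β : ℂ)) * a₃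
      = (D₁ : ℂ) / 2 * (b₂ - b₁ ^ 2 / 2) + (D₂ : ℂ) / 4 * b₁ ^ 2)
    (hb₂ : ‖b₂‖ ≤ 2) (hc₂ : ‖c₂‖ ≤ 2)
    (hden : (2 + 7 * α + 7 * β + 24 * α * β) * B₁ ^ 2 * D₁ ^ 2
        - (1 + 2 * α) ^ 2 * (1 + 3 * β) * (B₂ - B₁) * D₁ ^ 2
        - (1 + 2 * β) ^ 2 * (1 + 3 * α) * (D₂ - D₁) * B₁ ^ 2 ≠ 0) :
    ‖a₂‖ ≤
      B₁ * D₁ * Real.sqrt (B₁ * (1 + 3 * β) + D₁ * (1 + 3 * α)) /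
        Real.sqrt |(2 + 7 * α + 7 * β + 24 * α * β) * B₁ ^ 2 * D₁ ^ 2
          - (1 + 2 * α) ^ 2 * (1 + 3 * β) * (B₂ - B₁) * D₁ ^ 2
          - (1 + 2 * β) ^ 2 * (1 + 3 * α) * (D₂ - D₁) * B₁ ^ 2| := by
  change ppDenom α β B₁ B₂ D₁ D₂ ≠ 0 at hden
  change _ ≤ _ / √|ppDenom α β B₁ B₂ D₁ D₂|
  have hsum : ‖((1 + 3 * β) * B₁) • c₂ + ((1 + 3 * α) * D₁) • b₂‖
      ≤ ((1 + 3 * β) * B₁ + (1 + 3 * α) * D₁) * 2 :=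
    norm_smul_add_smul_le (by positivity) (by positivity) hc₂ hb₂
  refine le_mul_sqrt_div_sqrt_of_mul_sq_le (norm_nonneg a₂) (abs_pos.mpr hden) (by positivity) ?_
  calc |ppDenom α β B₁ B₂ D₁ D₂| * ‖a₂‖ ^ 2 = ‖(ppDenom α β B₁ B₂ D₁ D₂ : ℂ) * a₂ ^ 2‖ := by
        rw [norm_mul, norm_pow, Complex.norm_real, Real.norm_eq_abs]
    _ = (B₁ * D₁) ^ 2 / 2 * ‖((1 + 3 * β) * B₁) • c₂ + ((1 + 3 * α) * D₁) • b₂‖ := by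
        rw [ppDenom_mul_sq_eq h1 h2 h3 h4, norm_mul, Complex.norm_real,
          Real.norm_of_nonneg (by positivity), Complex.real_smul, Complex.real_smul]
    _ ≤ (B₁ * D₁) ^ 2 / 2 * (((1 + 3 * β) * B₁ + (1 + 3 * α) * D₁) * 2) := by gcongr
    _ = (B₁ * D₁) ^ 2 * (B₁ * (1 + 3 * β) + D₁ * (1 + 3 * α)) := by ring
end

section
/- Suppose complex numbers a_2, a_3, b_1, b_2, c_1, c_2 and reals α ≥ 0, β ≥ 0, B_1 > 0, D_1 > 0, B_2, D_2 satisfy the four equations: (1+2α)a_2 = B_1 c_1/2; 2(1+3α)a_3 − (1+2α)a_2^2 = (B_1/2)(c_2 − c_1^2/2) + (B_2/4)c_1^2; −(1+2β)a_2 = D_1 b_1/2; (3+10β)a_2^2 − 2(1+3β)a_3 = (D_1/2)(b_2 − b_1^2/2) + (D_2/4)b_1^2; together with |b_2| ≤ 2, |c_1| ≤ 2, |c_2| ≤ 2. Then with σ = 2+7α+7β+24αβ, 2σ|a_3| ≤ B_1(3+10β) + D_1(1+2α) + (3+10β)|B_2−B_1| + (1+2β)^2 B_1^2 |D_2−D_1|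 / (D_1^2 (1+2α)). -/
/-!
Adding `(3 + 10β)` times the second equation to `(1 + 2α)` times the fourth cancels `a₂²` and
leaves `2σ a₃`. The first and third equations make `b₁` a real multiple of `c₁`, so `2σ a₃` is a
real linear combination of `c₂`, `c₁²` and `b₂`, and the triangle inequality with `|c₂|, |c₁|, |b₂| ≤ 2`
gives the bound.
-/

open Complex

lemma norm_ofReal_mul_add_sq_add_le {z w u : ℂ} (p q r : ℝ)
    (hz : ‖z‖ ≤ 2) (hw : ‖w‖ ≤ 2) (hu : ‖u‖ ≤ 2) :
    ‖(p : ℂ) * z + (q : ℂ) * w ^ 2 + (r : ℂ) * u‖ ≤ 2 * |p| + 4 * |q| + 2 * |r| := by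
  have hw2 : ‖w‖ ^ 2 ≤ 4 := by nlinarith [norm_nonneg w]
  calc ‖(p : ℂ) * z + (q : ℂ) * w ^ 2 + (r : ℂ) * u‖
      ≤ ‖(p : ℂ) * z‖ + ‖(q : ℂ) * w ^ 2‖ + ‖(r : ℂ) * u‖ := norm_add₃_le
    _ = |p| * ‖z‖ + |q| * ‖w‖ ^ 2 + |r| * ‖u‖ := by
      simp only [norm_mul, norm_pow, norm_real, Real.norm_eq_abs]
    _ ≤ |p| * 2 + |q| * 4 + |r| * 2 := by gcongr
    _ = 2 * |p| + 4 * |q| + 2 * |r| := by ring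

lemma mul_a₃_eq_of_coeff_eqs {a₂ a₃ b₁ b₂ c₁ c₂ : ℂ} {α β B₁ B₂ D₁ D₂ : ℝ}
    (hα : 1 + 2 * α ≠ 0) (hD₁ : D₁ ≠ 0)
    (h1 : (1 + 2 * (α : ℂ)) * a₂ = (B₁ : ℂ) * c₁ / 2)
    (h2 : 2 * (1 + 3 * (α : ℂ)) * a₃ - (1 + 2 * (α : ℂ)) * a₂ ^ 2
      = (B₁ : ℂ) / 2 * (c₂ - c₁ ^ 2 / 2) + (B₂ : ℂ) / 4 * c₁ ^ 2)
    (h3 : -((1 + 2 * (β : ℂ)) * a₂) = (D₁ : ℂ) * b₁ / 2)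
    (h4 : (3 + 10 * (β : ℂ)) * a₂ ^ 2 - 2 * (1 + 3 * (β : ℂ)) * a₃
      = (D₁ : ℂ) / 2 * (b₂ - b₁ ^ 2 / 2) + (D₂ : ℂ) / 4 * b₁ ^ 2) :
    ((2 * (2 + 7 * α + 7 * β + 24 * α * β) : ℝ) : ℂ) * a₃ =
      (((3 + 10 * β) * B₁ / 2 : ℝ) : ℂ) * c₂
      + (((3 + 10 * β) * (B₂ - B₁) / 4
          + (1 + 2 * β) ^ 2 * B₁ ^ 2 * (D₂ - D₁) / (4 * D₁ ^ 2 * (1 + 2 * α)) : ℝ) : ℂ) * c₁ ^ 2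
      + (((1 + 2 * α) * D₁ / 2 : ℝ) : ℂ) * b₂ := by
  have hαC : (1 + 2 * (α : ℂ)) ≠ 0 := by exact_mod_cast hα
  have hD₁C : (D₁ : ℂ) ≠ 0 := by exact_mod_cast hD₁
  have hb₁ : b₁ = -((1 + 2 * β) * B₁ / (D₁ * (1 + 2 * α)) : ℝ) * c₁ := by
    push_cast
    field_simp
    linear_combination (-2) * (1 + 2 * (α : ℂ)) * h3 - 2 * (1 + 2 * (β : ℂ)) * h1
  calc ((2 * (2 + 7 * α + 7 * β + 24 * α * β) : ℝ) : ℂ) * a₃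
    _ = (3 + 10 * (β : ℂ)) * ((B₁ : ℂ) / 2 * c₂ + ((B₂ : ℂ) - B₁) / 4 * c₁ ^ 2)
          + (1 + 2 * (α : ℂ)) * ((D₁ : ℂ) / 2 * b₂ + ((D₂ : ℂ) - D₁) / 4 * b₁ ^ 2) := by
      push_cast
      linear_combination (3 + 10 * (β : ℂ)) * h2 + (1 + 2 * (α : ℂ)) * h4
    _ = _ := by
      rw [hb₁]
      push_cast
      field_simp
      ring

/-- The bound on `|a₃|` when `f ∈ P(α,φ)` and `f⁻¹ ∈ P(β,ψ)`. -/
theorem PP_a3_bound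
    (a₂ a₃ b₁ b₂ c₁ c₂ : ℂ) (α β B₁ B₂ D₁ D₂ : ℝ)
    (hα : 0 ≤ α) (hβ : 0 ≤ β) (hB₁ : 0 < B₁) (hD₁ : 0 < D₁)
    (h1 : (1 + 2 * (α : ℂ)) * a₂ = (B₁ : ℂ) * c₁ / 2)
    (h2 : 2 * (1 + 3 * (α : ℂ)) * a₃ - (1 + 2 * (α : ℂ)) * a₂ ^ 2
      = (B₁ : ℂ) / 2 * (c₂ - c₁ ^ 2 / 2) + (B₂ : ℂ) / 4 * c₁ ^ 2)
    (h3 : -((1 + 2 * (β : ℂ)) * a₂) = (D₁ : ℂ) * b₁ / 2)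
    (h4 : (3 + 10 * (β : ℂ)) * a₂ ^ 2 - 2 * (1 + 3 * (β : ℂ)) * a₃
      = (D₁ : ℂ) / 2 * (b₂ - b₁ ^ 2 / 2) + (D₂ : ℂ) / 4 * b₁ ^ 2)
    (hb₂ : ‖b₂‖ ≤ 2) (hc₁ : ‖c₁‖ ≤ 2) (hc₂ : ‖c₂‖ ≤ 2) :
    2 * (2 + 7 * α + 7 * β + 24 * α * β) * ‖a₃‖ ≤
      B₁ * (3 + 10 * β) + D₁ * (1 + 2 * α) + (3 + 10 * β) * |B₂ - B₁|
        + (1 + 2 * β) ^ 2 * B₁ ^ 2 * |D₂ - D₁| / (D₁ ^ 2 * (1 + 2 * α)) := by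
  have hα' : 0 < 1 + 2 * α := by linarith
  have hσ : 0 ≤ 2 * (2 + 7 * α + 7 * β + 24 * α * β) := by positivity
  have hbound := (congrArg norm (mul_a₃_eq_of_coeff_eqs hα'.ne' hD₁.ne' h1 h2 h3 h4)).trans_le
    (norm_ofReal_mul_add_sq_add_le _ _ _ hc₂ hc₁ hb₂)
  rw [norm_mul, norm_real, Real.norm_eq_abs, abs_of_nonneg hσ] at hbound
  have hQ : |(3 + 10 * β) * (B₂ - B₁) / 4
      + (1 + 2 * β) ^ 2 * B₁ ^ 2 * (D₂ - D₁) / (4 * D₁ ^ 2 * (1 + 2 * α))|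
      ≤ (3 + 10 * β) * |B₂ - B₁| / 4
        + (1 + 2 * β) ^ 2 * B₁ ^ 2 * |D₂ - D₁| / (4 * D₁ ^ 2 * (1 + 2 * α)) := by
    refine (abs_add_le _ _).trans_eq ?_
    simp only [abs_div, abs_mul, abs_pow, abs_of_pos hB₁, abs_of_pos hD₁, abs_of_pos hα',
      abs_of_pos (by positivity : (0 : ℝ) < 3 + 10 * β),
      abs_of_pos (by positivity : (0 : ℝ) < 1 + 2 * β), Nat.abs_ofNat]
  rw [abs_of_pos (by positivity : (0 : ℝ) < (3 + 10 * β) * B₁ / 2),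
    abs_of_pos (by positivity : (0 : ℝ) < (1 + 2 * α) * D₁ / 2)] at hbound
  have hsplit : (1 + 2 * β) ^ 2 * B₁ ^ 2 * |D₂ - D₁| / (D₁ ^ 2 * (1 + 2 * α))
      = 4 * ((1 + 2 * β) ^ 2 * B₁ ^ 2 * |D₂ - D₁| / (4 * D₁ ^ 2 * (1 + 2 * α))) := by
    field_simp
  linarith
end

section
/- Suppose complex numbers a_2, a_3, b_1, b_2, c_1, c_2 and reals α ≥ 0, β ≥ 0, B_1 > 0, D_1 > 0, B_2, D_2 satisfy: (1+α)a_2 = B_1 c_1/2; 2(1+2α)a_3 − (1+3α)a_2^2 = (B_1/2)(c_2 − c_1^2/2) + (B_2/4)c_1^2; −(1+β)a_2 = D_1 b_1/2; (3+5β)a_2^2 − 2(1+2β)a_3 = (D_1/2)(b_2 − b_1^2/2) + (D_2/4)b_1^2. Then b_1 = −(B_1(1+β)/(D_1(1+α))) c_1, and a_2^2 · 2[σ B_1^2 D_1^2 − (1+α)^2(1+2β)(B_2−B_1)D_1^2 − (1+β)^2(1+2α)(D_2−D_1)B_1^2] = B_1^2 D_1^2 [B_1(1+2β)c_2 + D_1(1+2α)b_2],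 where σ = 2 + 3α + 3β + 4αβ. -/
/-!
Adding `(1 + 2β)` times the second equation to `(1 + 2α)` times the fourth eliminates `a₃`
and leaves `σ a₂²` on the left, since `(1 + 2α)(3 + 5β) - (1 + 2β)(1 + 3α) = σ`. The first
and third equations express `c₁` and `b₁` through `a₂`; substituting their squares and
clearing the denominators `B₁²`, `D₁²` gives the identity for `a₂²`, while dividing one
by the other relates `b₁` to `c₁`.
-/

namespace BiUnivalent

variable {K : Type*} [Field K] [CharZero K] {a₂ a₃ b₁ b₂ c₁ c₂ α β B₁ B₂ D₁ D₂ : K}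

theorem sigma_mul_a₂_sq_eq
    (h2 : 2 * (1 + 2 * α) * a₃ - (1 + 3 * α) * a₂ ^ 2
      = B₁ / 2 * (c₂ - c₁ ^ 2 / 2) + B₂ / 4 * c₁ ^ 2)
    (h4 : (3 + 5 * β) * a₂ ^ 2 - 2 * (1 + 2 * β) * a₃
      = D₁ / 2 * (b₂ - b₁ ^ 2 / 2) + D₂ / 4 * b₁ ^ 2) :
    (2 + 3 * α + 3 * β + 4 * α * β) * a₂ ^ 2
      = (1 + 2 * β) * (B₁ / 2 * c₂ + (B₂ - B₁) / 4 * c₁ ^ 2)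
        + (1 + 2 * α) * (D₁ / 2 * b₂ + (D₂ - D₁) / 4 * b₁ ^ 2) := by
  linear_combination (1 + 2 * β) * h2 + (1 + 2 * α) * h4

theorem b₁_eq_mul_c₁ (hD₁ : D₁ ≠ 0) (hα : 1 + α ≠ 0)
    (h1 : (1 + α) * a₂ = B₁ * c₁ / 2) (h3 : -((1 + β) * a₂) = D₁ * b₁ / 2) :
    b₁ = -(B₁ * (1 + β) / (D₁ * (1 + α))) * c₁ := by
  field_simp
  linear_combination -2 * (1 + α) * h3 - 2 * (1 + β) * h1

theorem a₂_sq_mul_eq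
    (h1 : (1 + α) * a₂ = B₁ * c₁ / 2)
    (h2 : 2 * (1 + 2 * α) * a₃ - (1 + 3 * α) * a₂ ^ 2
      = B₁ / 2 * (c₂ - c₁ ^ 2 / 2) + B₂ / 4 * c₁ ^ 2)
    (h3 : -((1 + β) * a₂) = D₁ * b₁ / 2)
    (h4 : (3 + 5 * β) * a₂ ^ 2 - 2 * (1 + 2 * β) * a₃
      = D₁ / 2 * (b₂ - b₁ ^ 2 / 2) + D₂ / 4 * b₁ ^ 2) :
    a₂ ^ 2 * (2 * ((2 + 3 * α + 3 * β + 4 * α * β) * B₁ ^ 2 * D₁ ^ 2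
        - (1 + α) ^ 2 * (1 + 2 * β) * (B₂ - B₁) * D₁ ^ 2
        - (1 + β) ^ 2 * (1 + 2 * α) * (D₂ - D₁) * B₁ ^ 2))
      = B₁ ^ 2 * D₁ ^ 2 * (B₁ * (1 + 2 * β) * c₂ + D₁ * (1 + 2 * α) * b₂) := by
  have hc : (B₁ * c₁) ^ 2 = (2 * (1 + α) * a₂) ^ 2 := by
    rw [show B₁ * c₁ = 2 * (1 + α) * a₂ by linear_combination -2 * h1]
  have hb : (D₁ * b₁) ^ 2 = (2 * (1 + β) * a₂) ^ 2 := by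
    rw [show D₁ * b₁ = -(2 * (1 + β) * a₂) by linear_combination -2 * h3, neg_sq]
  linear_combination 2 * B₁ ^ 2 * D₁ ^ 2 * sigma_mul_a₂_sq_eq h2 h4
    + (1 + 2 * β) * (B₂ - B₁) * D₁ ^ 2 / 2 * hc + (1 + 2 * α) * (D₂ - D₁) * B₁ ^ 2 / 2 * hb

end BiUnivalent

theorem MM_coefficient_relations_general
    (a₂ a₃ b₁ b₂ c₁ c₂ : ℂ) (α β B₁ B₂ D₁ D₂ : ℝ)
    (hα : 0 ≤ α) (hD₁ : 0 < D₁)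
    (h1 : (1 + (α : ℂ)) * a₂ = (B₁ : ℂ) * c₁ / 2)
    (h2 : 2 * (1 + 2 * (α : ℂ)) * a₃ - (1 + 3 * (α : ℂ)) * a₂ ^ 2
      = (B₁ : ℂ) / 2 * (c₂ - c₁ ^ 2 / 2) + (B₂ : ℂ) / 4 * c₁ ^ 2)
    (h3 : -((1 + (β : ℂ)) * a₂) = (D₁ : ℂ) * b₁ / 2)
    (h4 : (3 + 5 * (β : ℂ)) * a₂ ^ 2 - 2 * (1 + 2 * (β : ℂ)) * a₃
      = (D₁ : ℂ) / 2 * (b₂ - b₁ ^ 2 / 2) + (D₂ : ℂ) / 4 * b₁ ^ 2) :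
    b₁ = -((B₁ : ℂ) * (1 + (β : ℂ)) / ((D₁ : ℂ) * (1 + (α : ℂ)))) * c₁ ∧
    a₂ ^ 2 * (2 * (((2 + 3 * α + 3 * β + 4 * α * β : ℝ) : ℂ) * (B₁ : ℂ) ^ 2 * (D₁ : ℂ) ^ 2
        - (1 + (α : ℂ)) ^ 2 * (1 + 2 * (β : ℂ)) * ((B₂ : ℂ) - (B₁ : ℂ)) * (D₁ : ℂ) ^ 2
        - (1 + (β : ℂ)) ^ 2 * (1 + 2 * (α : ℂ)) * ((D₂ : ℂ) - (D₁ : ℂ)) * (B₁ : ℂ) ^ 2))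
      = (B₁ : ℂ) ^ 2 * (D₁ : ℂ) ^ 2
        * ((B₁ : ℂ) * (1 + 2 * (β : ℂ)) * c₂ + (D₁ : ℂ) * (1 + 2 * (α : ℂ)) * b₂) := by
  have hD : (D₁ : ℂ) ≠ 0 := by exact_mod_cast hD₁.ne'
  have hα' : 1 + (α : ℂ) ≠ 0 := by exact_mod_cast (by linarith : 0 < 1 + α).ne'
  refine ⟨BiUnivalent.b₁_eq_mul_c₁ hD hα' h1 h3, ?_⟩
  push_cast
  exact BiUnivalent.a₂_sq_mul_eq h1 h2 h3 h4

/-- The coefficient relations for `f ∈ M(α,φ)`, `f⁻¹ ∈ M(β,ψ)`. -/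
theorem MM_coefficient_relations
    (a₂ a₃ b₁ b₂ c₁ c₂ : ℂ) (α β B₁ B₂ D₁ D₂ : ℝ)
    (hα : 0 ≤ α) (hβ : 0 ≤ β) (hB₁ : 0 < B₁) (hD₁ : 0 < D₁)
    (h1 : (1 + (α : ℂ)) * a₂ = (B₁ : ℂ) * c₁ / 2)
    (h2 : 2 * (1 + 2 * (α : ℂ)) * a₃ - (1 + 3 * (α : ℂ)) * a₂ ^ 2
      = (B₁ : ℂ) / 2 * (c₂ - c₁ ^ 2 / 2) + (B₂ : ℂ) / 4 * c₁ ^ 2)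
    (h3 : -((1 + (β : ℂ)) * a₂) = (D₁ : ℂ) * b₁ / 2)
    (h4 : (3 + 5 * (β : ℂ)) * a₂ ^ 2 - 2 * (1 + 2 * (β : ℂ)) * a₃
      = (D₁ : ℂ) / 2 * (b₂ - b₁ ^ 2 / 2) + (D₂ : ℂ) / 4 * b₁ ^ 2) :
    b₁ = -((B₁ : ℂ) * (1 + (β : ℂ)) / ((D₁ : ℂ) * (1 + (α : ℂ)))) * c₁ ∧
    a₂ ^ 2 * (2 * (((2 + 3 * α + 3 * β + 4 * α * β : ℝ) : ℂ) * (B₁ : ℂ) ^ 2 * (D₁ : ℂ) ^ 2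
        - (1 + (α : ℂ)) ^ 2 * (1 + 2 * (β : ℂ)) * ((B₂ : ℂ) - (B₁ : ℂ)) * (D₁ : ℂ) ^ 2
        - (1 + (β : ℂ)) ^ 2 * (1 + 2 * (α : ℂ)) * ((D₂ : ℂ) - (D₁ : ℂ)) * (B₁ : ℂ) ^ 2))
      = (B₁ : ℂ) ^ 2 * (D₁ : ℂ) ^ 2
        * ((B₁ : ℂ) * (1 + 2 * (β : ℂ)) * c₂ + (D₁ : ℂ) * (1 + 2 * (α : ℂ)) * b₂) :=
  MM_coefficient_relations_general a₂ a₃ b₁ b₂ c₁ c₂ α β B₁ B₂ D₁ D₂ hα hD₁ h1 h2 h3 h4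
end

section
/- Suppose complex numbers a_2, a_3, b_1, b_2, c_1, c_2 and reals α ≥ 0, β ∈ [0,1], B_1 > 0, D_1 > 0, B_2, D_2 satisfy: (1+2α)a_2 = B_1 c_1/2; 2(1+3α)a_3 − (1+2α)a_2^2 = (B_1/2)(c_2 − c_1^2/2) + (B_2/4)c_1^2; −(2−β)a_2 = D_1 b_1/2; (8(1−β) + (β/2)(β+5))a_2^2 − 2(3−2β)a_3 = (D_1/2)(b_2 − b_1^2/2) + (D_2/4)b_1^2; and |b_2| ≤ 2, |c_1| ≤ 2, |c_2| ≤ 2. Then with σ = 10 + 36α − 7β − 25αβ + β^2 + 3αβ^2, σ|a_3| ≤ (1/2)B_1(β^2 − 11β + 16) + D_1(1+2α) + (1/2)(β^2 − 11β + 16)|B_2 − B_1| + (2−β)^2 B_1^2 |D_2 − D_1| / (D_1^2 (1+2α)). -/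
/-!
Multiplying the second-coefficient equations by `(β² - 11β + 16)/2` and by `1 + 2α` and adding
eliminates `a₂²`, leaving `σ a₃` as a real combination of the two Carathéodory-type expressions
`(B₁/2)(c₂ - c₁²/2) + (B₂/4)c₁²` and `(D₁/2)(b₂ - b₁²/2) + (D₂/4)b₁²`. Each is bounded by the
triangle inequality, and `|b₁|` is controlled by `|c₁|` through the first-coefficient equations,
which both express `a₂`.
-/

lemma norm_half_mul_sub_add_le {B₁ B₂ : ℝ} {c₁ c₂ : ℂ} (hB₁ : 0 ≤ B₁) (hc₂ : ‖c₂‖ ≤ 2) :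
    ‖(B₁ : ℂ) / 2 * (c₂ - c₁ ^ 2 / 2) + (B₂ : ℂ) / 4 * c₁ ^ 2‖
      ≤ B₁ + |B₂ - B₁| / 4 * ‖c₁‖ ^ 2 := by
  have hsplit : (B₁ : ℂ) / 2 * (c₂ - c₁ ^ 2 / 2) + (B₂ : ℂ) / 4 * c₁ ^ 2
      = ((B₁ / 2 : ℝ) : ℂ) * c₂ + (((B₂ - B₁) / 4 : ℝ) : ℂ) * c₁ ^ 2 := by
    push_cast; ring
  rw [hsplit]
  refine (norm_add_le _ _).trans ?_
  simp only [norm_mul, norm_pow, Complex.norm_real, Real.norm_eq_abs, abs_div,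
    abs_of_nonneg hB₁, abs_two, abs_of_pos (by norm_num : (0 : ℝ) < 4)]
  nlinarith

lemma sq_norm_le_of_first_coeff {a₂ b₁ c₁ : ℂ} {α β B₁ D₁ : ℝ}
    (hA : 0 < 1 + 2 * α) (hD₁ : 0 < D₁)
    (h1 : (1 + 2 * (α : ℂ)) * a₂ = (B₁ : ℂ) * c₁ / 2)
    (h3 : -((2 - (β : ℂ)) * a₂) = (D₁ : ℂ) * b₁ / 2) (hc₁ : ‖c₁‖ ≤ 2) :
    ‖b₁‖ ^ 2 ≤ 4 * (2 - β) ^ 2 * B₁ ^ 2 / (D₁ ^ 2 * (1 + 2 * α) ^ 2) := by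
  have hb₁ : ((D₁ * (1 + 2 * α) : ℝ) : ℂ) * b₁ = -(((2 - β) * B₁ : ℝ) : ℂ) * c₁ := by
    push_cast
    linear_combination (-2 * (1 + 2 * (α : ℂ))) * h3 + (-2 * ((2 : ℂ) - β)) * h1
  have hnorm : D₁ * (1 + 2 * α) * ‖b₁‖ = |2 - β| * |B₁| * ‖c₁‖ := by
    simpa only [norm_mul, norm_neg, Complex.norm_real, Real.norm_eq_abs, abs_of_pos hD₁,
      abs_of_pos hA] using congrArg (‖·‖) hb₁
  rw [le_div_iff₀ (by positivity)]
  calc ‖b₁‖ ^ 2 * (D₁ ^ 2 * (1 + 2 * α) ^ 2) = (|2 - β| * |B₁| * ‖c₁‖) ^ 2 := by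
        rw [← hnorm]; ring
    _ ≤ (|2 - β| * |B₁| * 2) ^ 2 := by gcongr
    _ = 4 * (2 - β) ^ 2 * B₁ ^ 2 := by rw [mul_pow, mul_pow, sq_abs, sq_abs]; ring

lemma mul_norm_le_norm_ofReal_mul (σ : ℝ) (z : ℂ) : σ * ‖z‖ ≤ ‖(σ : ℂ) * z‖ := by
  rw [norm_mul, Complex.norm_real, Real.norm_eq_abs]
  gcongr
  exact le_abs_self σ

theorem PL_a3_bound_general
    (a₂ a₃ b₁ b₂ c₁ c₂ : ℂ) (α β B₁ B₂ D₁ D₂ : ℝ)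
    (hα : 0 ≤ α) (hβ1 : β ≤ 1) (hB₁ : 0 < B₁) (hD₁ : 0 < D₁)
    (h1 : (1 + 2 * (α : ℂ)) * a₂ = (B₁ : ℂ) * c₁ / 2)
    (h2 : 2 * (1 + 3 * (α : ℂ)) * a₃ - (1 + 2 * (α : ℂ)) * a₂ ^ 2
      = (B₁ : ℂ) / 2 * (c₂ - c₁ ^ 2 / 2) + (B₂ : ℂ) / 4 * c₁ ^ 2)
    (h3 : -((2 - (β : ℂ)) * a₂) = (D₁ : ℂ) * b₁ / 2)
    (h4 : (8 * (1 - (β : ℂ)) + (β : ℂ) / 2 * ((β : ℂ) + 5)) * a₂ ^ 2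
        - 2 * (3 - 2 * (β : ℂ)) * a₃
      = (D₁ : ℂ) / 2 * (b₂ - b₁ ^ 2 / 2) + (D₂ : ℂ) / 4 * b₁ ^ 2)
    (hb₂ : ‖b₂‖ ≤ 2) (hc₁ : ‖c₁‖ ≤ 2) (hc₂ : ‖c₂‖ ≤ 2) :
    (10 + 36 * α - 7 * β - 25 * α * β + β ^ 2 + 3 * α * β ^ 2) * ‖a₃‖ ≤
      1 / 2 * B₁ * (β ^ 2 - 11 * β + 16) + D₁ * (1 + 2 * α)
        + 1 / 2 * (β ^ 2 - 11 * β + 16) * |B₂ - B₁|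
        + (2 - β) ^ 2 * B₁ ^ 2 * |D₂ - D₁| / (D₁ ^ 2 * (1 + 2 * α)) := by
  have hA : 0 < 1 + 2 * α := by linarith
  have hs : 0 ≤ (β ^ 2 - 11 * β + 16) / 2 := by nlinarith
  have hc₁sq : ‖c₁‖ ^ 2 ≤ 2 ^ 2 := by gcongr
  have hb₁sq := sq_norm_le_of_first_coeff hA hD₁ h1 h3 hc₁
  have elim : ((10 + 36 * α - 7 * β - 25 * α * β + β ^ 2 + 3 * α * β ^ 2 : ℝ) : ℂ) * a₃
      = (((β ^ 2 - 11 * β + 16) / 2 : ℝ) : ℂ)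
          * ((B₁ : ℂ) / 2 * (c₂ - c₁ ^ 2 / 2) + (B₂ : ℂ) / 4 * c₁ ^ 2)
        + ((1 + 2 * α : ℝ) : ℂ) * ((D₁ : ℂ) / 2 * (b₂ - b₁ ^ 2 / 2) + (D₂ : ℂ) / 4 * b₁ ^ 2) := by
    rw [← h2, ← h4]; push_cast; ring
  calc _ ≤ ‖((10 + 36 * α - 7 * β - 25 * α * β + β ^ 2 + 3 * α * β ^ 2 : ℝ) : ℂ) * a₃‖ :=
        mul_norm_le_norm_ofReal_mul _ _
    _ ≤ (β ^ 2 - 11 * β + 16) / 2 * (B₁ + |B₂ - B₁| / 4 * ‖c₁‖ ^ 2)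
        + (1 + 2 * α) * (D₁ + |D₂ - D₁| / 4 * ‖b₁‖ ^ 2) := by
      rw [elim]
      refine (norm_add_le _ _).trans ?_
      simp only [norm_mul, Complex.norm_real, Real.norm_eq_abs, abs_of_nonneg hs,
        abs_of_pos hA]
      gcongr
      exacts [norm_half_mul_sub_add_le hB₁.le hc₂, norm_half_mul_sub_add_le hD₁.le hb₂]
    _ ≤ (β ^ 2 - 11 * β + 16) / 2 * (B₁ + |B₂ - B₁| / 4 * 2 ^ 2)
        + (1 + 2 * α) * (D₁ + |D₂ - D₁| / 4
          * (4 * (2 - β) ^ 2 * B₁ ^ 2 / (D₁ ^ 2 * (1 + 2 * α) ^ 2))) := by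
      gcongr
    _ = _ := by field_simp; ring

/-- The bound on `|a₃|` when `f ∈ P(α,φ)` and `f⁻¹ ∈ L(β,ψ)`. -/
theorem PL_a3_bound
    (a₂ a₃ b₁ b₂ c₁ c₂ : ℂ) (α β B₁ B₂ D₁ D₂ : ℝ)
    (hα : 0 ≤ α) (hβ0 : 0 ≤ β) (hβ1 : β ≤ 1) (hB₁ : 0 < B₁) (hD₁ : 0 < D₁)
    (h1 : (1 + 2 * (α : ℂ)) * a₂ = (B₁ : ℂ) * c₁ / 2)
    (h2 : 2 * (1 + 3 * (α : ℂ)) * a₃ - (1 + 2 * (α : ℂ)) * a₂ ^ 2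
      = (B₁ : ℂ) / 2 * (c₂ - c₁ ^ 2 / 2) + (B₂ : ℂ) / 4 * c₁ ^ 2)
    (h3 : -((2 - (β : ℂ)) * a₂) = (D₁ : ℂ) * b₁ / 2)
    (h4 : (8 * (1 - (β : ℂ)) + (β : ℂ) / 2 * ((β : ℂ) + 5)) * a₂ ^ 2
        - 2 * (3 - 2 * (β : ℂ)) * a₃
      = (D₁ : ℂ) / 2 * (b₂ - b₁ ^ 2 / 2) + (D₂ : ℂ) / 4 * b₁ ^ 2)
    (hb₂ : ‖b₂‖ ≤ 2) (hc₁ : ‖c₁‖ ≤ 2) (hc₂ : ‖c₂‖ ≤ 2) :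
    (10 + 36 * α - 7 * β - 25 * α * β + β ^ 2 + 3 * α * β ^ 2) * ‖a₃‖ ≤
      1 / 2 * B₁ * (β ^ 2 - 11 * β + 16) + D₁ * (1 + 2 * α)
        + 1 / 2 * (β ^ 2 - 11 * β + 16) * |B₂ - B₁|
        + (2 - β) ^ 2 * B₁ ^ 2 * |D₂ - D₁| / (D₁ ^ 2 * (1 + 2 * α)) :=
  PL_a3_bound_general a₂ a₃ b₁ b₂ c₁ c₂ α β B₁ B₂ D₁ D₂ hα hβ1 hB₁ hD₁ h1 h2 h3 h4 hb₂ hc₁ hc₂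
end
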